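/- The word u_n defined by the inductive replacement procedure satisfies the length bound l(t⁻¹·u_n) ≤ 100·2ⁿ, where l denotes word length in the generators x, y, t and their inverses. -/
import Mathlib


/-- Tower of exponentials: E 0 = 1, E (n+1) = 2^(E n). -/
def E : ℕ → ℕ
  | 0 => 1
  | n + 1 => 2 ^ E n

/-- Words in the generators x, y, t (indices 0, 1, 2) and their inverses;
`(i, true)` is the generator, `(i, false)` its inverse. -/
abbrev W := List (Fin 3 × Bool)

/-- Formal inverse of a word. -/
def winv (w : W) : W := (w.map fun p => (p.1, !p.2)).reverse

/-- The word x^j. -/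
def xpw (j : ℕ) : W := List.replicate j ((0 : Fin 3), true)

/-- The commutator word [a,b] = a⁻¹b⁻¹ab. -/
def commw (a b : W) : W := winv a ++ winv b ++ a ++ b

/-- `Yw m k` is the word standing for y^{E k} after m replacement steps:
`Yw 0 k = y^{E k}` and `Yw (m+1) k = t⁻¹ (Yw m (k-1))⁻¹ x (Yw m (k-1)) t`. -/
def Yw : ℕ → ℕ → W
  | 0, k => List.replicate (E k) ((1 : Fin 3), true)
  | m + 1, k =>
      [((2 : Fin 3), false)] ++ winv (Yw m (k - 1)) ++ [((0 : Fin 3), true)] ++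
        Yw m (k - 1) ++ [((2 : Fin 3), true)]

/-- The word u_n = u_{n,n}, obtained from
u_{n,0} = [y^{-E n} x y^{E n}, x³]·[y^{-E n} x y^{E n}, x⁵]·[y^{-E n} x y^{E n}, x⁷]
by n replacement steps. -/
def uword (n : ℕ) : W :=
  let c := Yw n n
  let a := winv c ++ [((0 : Fin 3), true)] ++ c
  commw a (xpw 3) ++ commw a (xpw 5) ++ commw a (xpw 7)


lemma winv_len (w : W) : (winv w).length = w.length := by
  simp [winv]

lemma Yw_len (n : ℕ) : (Yw n n).length + 3 = 2 ^ (n + 2) := by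
  induction n with
  | zero => simp [Yw, E]
  | succ n ih =>
      have h : (Yw (n + 1) (n + 1)).length = 2 * (Yw n n).length + 3 := by
        simp [Yw, winv_len]; ring
      rw [h, pow_succ]
      omega

/-- The length of the word a_n = t⁻¹ u_n is at most 100·2ⁿ. -/
theorem stmt17 (n : ℕ) :
    (((2 : Fin 3), false) :: uword n).length ≤ 100 * 2 ^ n := by
  have h := Yw_len n
  have h2 : (1:ℕ) ≤ 2 ^ n := Nat.one_le_two_pow
  simp only [List.length_cons, uword, commw, xpw, winv_len, List.length_append,
    List.length_replicate, List.length_cons, List.length_nil]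
  have : 2 ^ (n + 2) = 4 * 2 ^ n := by rw [pow_add]; ring
  omega
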